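/- arXiv:1205.4654 — 3 statements merged into one kernel-verified Lean document; each statement's English description precedes it below -/
import Mathlib

section
/- If W lies in C_j (i.e., W = a + jb with a, b real) and V is any bicomplex number, then |W| equals the modulus of W as an element of C_j, and |WV| = |W|·|V|. -/
noncomputable section

open MeasureTheory

/-- Bicomplex numbers: `u + j v` with `u, v ∈ ℂ` (the copy `C_i`). -/
@[ext]
structure Bicomplex : Type where
  sc : ℂ
  vec : ℂ

namespace Bicomplex

instance : Zero Bicomplex := ⟨⟨0, 0⟩⟩
instance : One Bicomplex := ⟨⟨1, 0⟩⟩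
instance : Add Bicomplex := ⟨fun a b => ⟨a.sc + b.sc, a.vec + b.vec⟩⟩
instance : Neg Bicomplex := ⟨fun a => ⟨-a.sc, -a.vec⟩⟩
instance : Mul Bicomplex :=
  ⟨fun a b => ⟨a.sc * b.sc - a.vec * b.vec, a.sc * b.vec + a.vec * b.sc⟩⟩

@[simp] theorem zero_sc : (0 : Bicomplex).sc = 0 := rfl
@[simp] theorem zero_vec : (0 : Bicomplex).vec = 0 := rfl
@[simp] theorem one_sc : (1 : Bicomplex).sc = 1 := rfl
@[simp] theorem one_vec : (1 : Bicomplex).vec = 0 := rfl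
@[simp] theorem add_sc' (a b : Bicomplex) : (a + b).sc = a.sc + b.sc := rfl
@[simp] theorem add_vec' (a b : Bicomplex) : (a + b).vec = a.vec + b.vec := rfl
@[simp] theorem neg_sc' (a : Bicomplex) : (-a).sc = -a.sc := rfl
@[simp] theorem neg_vec' (a : Bicomplex) : (-a).vec = -a.vec := rfl
@[simp] theorem mul_sc' (a b : Bicomplex) : (a * b).sc = a.sc * b.sc - a.vec * b.vec := rfl
@[simp] theorem mul_vec' (a b : Bicomplex) : (a * b).vec = a.sc * b.vec + a.vec * b.sc := rfl

instance : CommRing Bicomplex where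
  add_assoc a b c := by ext <;> simp <;> ring
  zero_add a := by ext <;> simp
  add_zero a := by ext <;> simp
  add_comm a b := by ext <;> simp <;> ring
  left_distrib a b c := by ext <;> simp <;> ring
  right_distrib a b c := by ext <;> simp <;> ring
  zero_mul a := by ext <;> simp
  mul_zero a := by ext <;> simp
  mul_assoc a b c := by ext <;> simp <;> ring
  one_mul a := by ext <;> simp
  mul_one a := by ext <;> simp
  neg_add_cancel a := by ext <;> simp
  mul_comm a b := by ext <;> simp <;> ring
  nsmul := nsmulRec
  zsmul := zsmulRec

/-- The embedding of `ℂ` (the copy `C_i`) into the bicomplex numbers. -/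
def ofC (u : ℂ) : Bicomplex := ⟨u, 0⟩

/-- The imaginary unit `i`. -/
def iB : Bicomplex := ⟨Complex.I, 0⟩

/-- The imaginary unit `j`. -/
def jB : Bicomplex := ⟨0, 1⟩

/-- Conjugation with respect to `j`: `u + jv ↦ u - jv`. -/
def conj (W : Bicomplex) : Bicomplex := ⟨W.sc, -W.vec⟩

/-- The idempotent `P⁺ = (1 + ij)/2`. -/
def Pplus : Bicomplex := ofC (1 / 2) * (1 + iB * jB)

/-- The idempotent `P⁻ = (1 - ij)/2`. -/
def Pminus : Bicomplex := ofC (1 / 2) * (1 - iB * jB)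

/-- The idempotent component `W⁺ = Sc W - i Vec W`. -/
def plus (W : Bicomplex) : ℂ := W.sc - Complex.I * W.vec

/-- The idempotent component `W⁻ = Sc W + i Vec W`. -/
def minus (W : Bicomplex) : ℂ := W.sc + Complex.I * W.vec

/-- The norm `|W| = (|W⁺| + |W⁻|)/2`. -/
def bnorm (W : Bicomplex) : ℝ := (‖plus W‖ + ‖minus W‖) / 2

/-- The bicomplex exponential `E[W] = P⁺ e^{W⁺} + P⁻ e^{W⁻}`. -/
def bexp (W : Bicomplex) : Bicomplex :=
  Pplus * ofC (Complex.exp (plus W)) + Pminus * ofC (Complex.exp (minus W))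

end Bicomplex

/-! The idempotent components `W ↦ W⁺`, `W ↦ W⁻` are multiplicative maps to `ℂ`. For `W ∈ C_j`
the component `W⁻` is the complex conjugate of `W⁺`, so `|W| = |W⁺| = |W⁻|` and this common factor
comes out of both halves of `|WV| = (|W⁺||V⁺| + |W⁻||V⁻|)/2`. -/

namespace Bicomplex

theorem plus_mul (A B : Bicomplex) : plus (A * B) = plus A * plus B := by
  simp only [plus, mul_sc', mul_vec']
  linear_combination -(A.vec * B.vec) * Complex.I_sq

theorem minus_mul (A B : Bicomplex) : minus (A * B) = minus A * minus B := by
  simp only [minus, mul_sc', mul_vec']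
  linear_combination -(A.vec * B.vec) * Complex.I_sq

theorem bnorm_eq_norm_plus {W : Bicomplex} (h : ‖plus W‖ = ‖minus W‖) :
    bnorm W = ‖plus W‖ := by
  rw [bnorm, ← h]
  ring

theorem bnorm_mul_of_norm_plus_eq_norm_minus {W : Bicomplex} (h : ‖plus W‖ = ‖minus W‖)
    (V : Bicomplex) : bnorm (W * V) = bnorm W * bnorm V := by
  rw [bnorm_eq_norm_plus h, bnorm, bnorm, plus_mul, minus_mul, norm_mul, norm_mul, ← h]
  ring

theorem minus_eq_conj_plus {W : Bicomplex} (h1 : W.sc.im = 0) (h2 : W.vec.im = 0) :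
    minus W = starRingEnd ℂ (plus W) := by
  apply Complex.ext <;> simp [plus, minus, h1, h2]

theorem norm_plus_eq_norm_minus {W : Bicomplex} (h1 : W.sc.im = 0) (h2 : W.vec.im = 0) :
    ‖plus W‖ = ‖minus W‖ := by
  rw [minus_eq_conj_plus h1 h2, Complex.norm_conj]

theorem norm_plus_eq_sqrt {W : Bicomplex} (h1 : W.sc.im = 0) (h2 : W.vec.im = 0) :
    ‖plus W‖ = Real.sqrt (W.sc.re ^ 2 + W.vec.re ^ 2) := by
  rw [Complex.norm_eq_sqrt_sq_add_sq]
  simp [plus, h1, h2]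

end Bicomplex

open Bicomplex in
/-- If `W ∈ C_j` (i.e. `W = a + jb` with `a, b` real) then `|W|` equals the modulus
of `W` as an element of `C_j`, and `|WV| = |W|·|V|` for every bicomplex `V`. -/
theorem bicomplex_bnorm_of_Cj (W : Bicomplex) (h1 : W.sc.im = 0) (h2 : W.vec.im = 0) :
    bnorm W = Real.sqrt (W.sc.re ^ 2 + W.vec.re ^ 2) ∧
      ∀ V : Bicomplex, bnorm (W * V) = bnorm W * bnorm V := by
  have h := norm_plus_eq_norm_minus h1 h2
  exact ⟨(bnorm_eq_norm_plus h).trans (norm_plus_eq_sqrt h1 h2),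
    bnorm_mul_of_norm_plus_eq_norm_minus h⟩
end
end

section
/- Let a, b be C_j-valued functions. A C¹ bicomplex function W satisfies ∂_z̄W = aW + bW̄ if and only if the two C_j-valued functions H₁ := Re(Sc W) + j Re(Vec W) and H₂ := Im(Sc W) + j Im(Vec W) each satisfy the same (complex) Vekua equation ∂_z̄H = aH + bH̄. -/
noncomputable section

open MeasureTheory

namespace Bicomplex

/-- Partial derivative `∂_x` of a `ℂ`-valued function on `ℝ²`. -/
def px (f : ℝ × ℝ → ℂ) (p : ℝ × ℝ) : ℂ := fderiv ℝ f p (1, 0)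

/-- Partial derivative `∂_y` of a `ℂ`-valued function on `ℝ²`. -/
def py (f : ℝ × ℝ → ℂ) (p : ℝ × ℝ) : ℂ := fderiv ℝ f p (0, 1)

/-- The bicomplex Cauchy–Riemann operator `∂_z̄ = (∂_x + j ∂_y)/2`
applied to a bicomplex-valued function `W = u + j v`:
`∂_z̄ W = (u_x - v_y)/2 + j (v_x + u_y)/2`. -/
def dbar (W : ℝ × ℝ → Bicomplex) (p : ℝ × ℝ) : Bicomplex :=
  ⟨(px (fun q => (W q).sc) p - py (fun q => (W q).vec) p) / 2,
   (px (fun q => (W q).vec) p + py (fun q => (W q).sc) p) / 2⟩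

/-- The bicomplex operator `∂_z = (∂_x - j ∂_y)/2`. -/
def dz (W : ℝ × ℝ → Bicomplex) (p : ℝ × ℝ) : Bicomplex :=
  ⟨(px (fun q => (W q).sc) p + py (fun q => (W q).vec) p) / 2,
   (px (fun q => (W q).vec) p - py (fun q => (W q).sc) p) / 2⟩

/-- The complex Cauchy–Riemann operator `d_z = (∂_x - i ∂_y)/2`. -/
def dzC (f : ℝ × ℝ → ℂ) (p : ℝ × ℝ) : ℂ := (px f p - Complex.I * py f p) / 2

/-- The complex Cauchy–Riemann operator `d_z̄ = (∂_x + i ∂_y)/2`. -/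
def dzbarC (f : ℝ × ℝ → ℂ) (p : ℝ × ℝ) : ℂ := (px f p + Complex.I * py f p) / 2

/-- The Laplacian `Δ = ∂_x² + ∂_y²`. -/
def lap (f : ℝ × ℝ → ℂ) (p : ℝ × ℝ) : ℂ :=
  px (fun q => px f q) p + py (fun q => py f q) p

/-- Real differentiability of a bicomplex-valued function at a point (componentwise). -/
def DiffAt (W : ℝ × ℝ → Bicomplex) (p : ℝ × ℝ) : Prop :=
  DifferentiableAt ℝ (fun q => (W q).sc) p ∧ DifferentiableAt ℝ (fun q => (W q).vec) p

end Bicomplex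

/-! Every bicomplex `W` splits as `W = H₁ + i H₂` with `H₁, H₂` taking values in `C_j`. This
splitting is `ℝ`-linear and commutes with `∂_z̄` and with conjugation in `j`, and, because `a` and
`b` are `C_j`-valued, also with multiplication by `a` and `b`. So the Vekua equation for `W` holds
exactly when it holds for both parts. -/

section

variable {𝕜 E F G : Type*} [NontriviallyNormedField 𝕜] [NormedAddCommGroup E] [NormedSpace 𝕜 E]
  [NormedAddCommGroup F] [NormedSpace 𝕜 F] [NormedAddCommGroup G] [NormedSpace 𝕜 G]

theorem ContinuousLinearMap.fderiv_comp_apply (L : F →L[𝕜] G) {f : E → F} {x : E}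
    (hf : DifferentiableAt 𝕜 f x) (v : E) :
    fderiv 𝕜 (fun y => L (f y)) x v = L (fderiv 𝕜 f x v) := by
  rw [fderiv_fun_comp x L.differentiableAt hf, L.fderiv]
  rfl

end

namespace Bicomplex

/-- `W = reI W + iB * imI W` with `reI W, imI W` taking values in `C_j`. -/
def reI (W : Bicomplex) : Bicomplex := ⟨(W.sc.re : ℂ), (W.vec.re : ℂ)⟩

def imI (W : Bicomplex) : Bicomplex := ⟨(W.sc.im : ℂ), (W.vec.im : ℂ)⟩

theorem eq_iff_reI_eq_and_imI_eq {X Y : Bicomplex} :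
    X = Y ↔ reI X = reI Y ∧ imI X = imI Y := by
  simp only [Bicomplex.ext_iff, reI, imI, Complex.ext_iff]
  tauto

@[simp] theorem reI_add (X Y : Bicomplex) : reI (X + Y) = reI X + reI Y := by
  ext <;> simp [reI]

@[simp] theorem imI_add (X Y : Bicomplex) : imI (X + Y) = imI X + imI Y := by
  ext <;> simp [imI]

@[simp] theorem reI_conj (X : Bicomplex) : reI (conj X) = conj (reI X) := by
  ext <;> simp [reI, conj]

@[simp] theorem imI_conj (X : Bicomplex) : imI (conj X) = conj (imI X) := by
  ext <;> simp [imI, conj]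

theorem reI_mul_of_im_eq_zero {a : Bicomplex} (ha : a.sc.im = 0 ∧ a.vec.im = 0) (X : Bicomplex) :
    reI (a * X) = a * reI X := by
  ext <;> apply Complex.ext <;> simp [reI, ha.1, ha.2]

theorem imI_mul_of_im_eq_zero {a : Bicomplex} (ha : a.sc.im = 0 ∧ a.vec.im = 0) (X : Bicomplex) :
    imI (a * X) = a * imI X := by
  ext <;> apply Complex.ext <;> simp [imI, ha.1, ha.2]

theorem dbar_reI {W : ℝ × ℝ → Bicomplex} {p : ℝ × ℝ} (hW : DiffAt W p) :
    dbar (fun q => reI (W q)) p = reI (dbar W p) := by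
  have hre : ∀ (f : ℝ × ℝ → ℂ), DifferentiableAt ℝ f p → ∀ v,
      fderiv ℝ (fun q => ((f q).re : ℂ)) p v = ((fderiv ℝ f p v).re : ℂ) :=
    fun f hf v => (Complex.ofRealCLM.comp Complex.reCLM).fderiv_comp_apply hf v
  ext <;> simp [dbar, reI, px, py, hre _ hW.1, hre _ hW.2]

theorem dbar_imI {W : ℝ × ℝ → Bicomplex} {p : ℝ × ℝ} (hW : DiffAt W p) :
    dbar (fun q => imI (W q)) p = imI (dbar W p) := by
  have him : ∀ (f : ℝ × ℝ → ℂ), DifferentiableAt ℝ f p → ∀ v,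
      fderiv ℝ (fun q => ((f q).im : ℂ)) p v = ((fderiv ℝ f p v).im : ℂ) :=
    fun f hf v => (Complex.ofRealCLM.comp Complex.imCLM).fderiv_comp_apply hf v
  ext <;> simp [dbar, imI, px, py, him _ hW.1, him _ hW.2]

theorem dbar_eq_vekua_iff_reI_and_imI {a b : Bicomplex} (ha : a.sc.im = 0 ∧ a.vec.im = 0)
    (hb : b.sc.im = 0 ∧ b.vec.im = 0) {W : ℝ × ℝ → Bicomplex} {p : ℝ × ℝ} (hW : DiffAt W p) :
    dbar W p = a * W p + b * conj (W p) ↔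
      dbar (fun q => reI (W q)) p = a * reI (W p) + b * conj (reI (W p)) ∧
        dbar (fun q => imI (W q)) p = a * imI (W p) + b * conj (imI (W p)) := by
  rw [eq_iff_reI_eq_and_imI_eq, dbar_reI hW, dbar_imI hW, reI_add, imI_add,
    reI_mul_of_im_eq_zero ha, reI_mul_of_im_eq_zero hb, imI_mul_of_im_eq_zero ha,
    imI_mul_of_im_eq_zero hb, reI_conj, imI_conj]

end Bicomplex

open Bicomplex in
theorem bicomplex_vekua_decouple_general (Ω : Set (ℝ × ℝ))
    (a b : ℝ × ℝ → Bicomplex)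
    (ha : ∀ p ∈ Ω, (a p).sc.im = 0 ∧ (a p).vec.im = 0)
    (hb : ∀ p ∈ Ω, (b p).sc.im = 0 ∧ (b p).vec.im = 0)
    (W : ℝ × ℝ → Bicomplex) (hW : ∀ p ∈ Ω, DiffAt W p) :
    (∀ p ∈ Ω, dbar W p = a p * W p + b p * conj (W p)) ↔
      ((∀ p ∈ Ω,
          dbar (fun q => (⟨((W q).sc.re : ℂ), ((W q).vec.re : ℂ)⟩ : Bicomplex)) p =
            a p * ⟨((W p).sc.re : ℂ), ((W p).vec.re : ℂ)⟩ +
              b p * conj ⟨((W p).sc.re : ℂ), ((W p).vec.re : ℂ)⟩) ∧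
        ∀ p ∈ Ω,
          dbar (fun q => (⟨((W q).sc.im : ℂ), ((W q).vec.im : ℂ)⟩ : Bicomplex)) p =
            a p * ⟨((W p).sc.im : ℂ), ((W p).vec.im : ℂ)⟩ +
              b p * conj ⟨((W p).sc.im : ℂ), ((W p).vec.im : ℂ)⟩) := by
  rw [← forall₂_and]
  exact forall₂_congr fun p hp =>
    dbar_eq_vekua_iff_reI_and_imI (ha p hp) (hb p hp) (hW p hp)

open Bicomplex in
/-- For `C_j`-valued coefficients `a`, `b`, a `C¹` bicomplex function `W` satisfies
`∂_z̄W = aW + bW̄` iff both `H₁ = Re(Sc W) + j Re(Vec W)` and `H₂ = Im(Sc W) + j Im(Vec W)`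
satisfy the same (complex) Vekua equation. -/
theorem bicomplex_vekua_decouple (Ω : Set (ℝ × ℝ)) (hΩ : IsOpen Ω)
    (a b : ℝ × ℝ → Bicomplex)
    (ha : ∀ p ∈ Ω, (a p).sc.im = 0 ∧ (a p).vec.im = 0)
    (hb : ∀ p ∈ Ω, (b p).sc.im = 0 ∧ (b p).vec.im = 0)
    (W : ℝ × ℝ → Bicomplex) (hW : ∀ p ∈ Ω, DiffAt W p) :
    (∀ p ∈ Ω, dbar W p = a p * W p + b p * conj (W p)) ↔
      ((∀ p ∈ Ω,
          dbar (fun q => (⟨((W q).sc.re : ℂ), ((W q).vec.re : ℂ)⟩ : Bicomplex)) p =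
            a p * ⟨((W p).sc.re : ℂ), ((W p).vec.re : ℂ)⟩ +
              b p * conj ⟨((W p).sc.re : ℂ), ((W p).vec.re : ℂ)⟩) ∧
        ∀ p ∈ Ω,
          dbar (fun q => (⟨((W q).sc.im : ℂ), ((W q).vec.im : ℂ)⟩ : Bicomplex)) p =
            a p * ⟨((W p).sc.im : ℂ), ((W p).vec.im : ℂ)⟩ +
              b p * conj ⟨((W p).sc.im : ℂ), ((W p).vec.im : ℂ)⟩) :=
  bicomplex_vekua_decouple_general Ω a b ha hb W hW
end
end

section
/- Let f ∈ C²(Ω) be a nonvanishing C_i-valued solution of the Schrödinger equation Δf = qf on a domain Ω, and let W = u + jv (u = Sc W, v = Vec W, both C_i-valued) be a C² solution of the main bicomplex Vekua equation ∂_z̄W = (∂_z̄f / f)·W̄ on Ω. Then u solves Δu - qu = 0 and v solves Δv - q₁v = 0, where q₁ = 2((∂_x f)² + (∂_y f)²)/f² - q. -/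
noncomputable section

open MeasureTheory

/-!
In components the main Vekua equation reads `f u_x - f_x u = (fv)_y` and
`f u_y - f_y u = -(fv)_x`: the field `f∇u - u∇f` is the gradient of `fv` rotated by a right angle.
Its divergence `fΔu - uΔf` therefore vanishes, which is the equation for `u`, and its curl
`2(f_y u_x - f_x u_y)` equals `Δ(fv) = fΔv + 2∇f·∇v + vΔf`. Multiplying the latter by `f` and
eliminating `f u_x` and `f u_y` with the component equations leaves `f²Δv = (2|∇f|² - fΔf)v`.
-/

open Filter Topology

namespace Bicomplex

section Calculus

variable {p : ℝ × ℝ} {a b : ℝ × ℝ → ℂ}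

theorem px_add (ha : DifferentiableAt ℝ a p) (hb : DifferentiableAt ℝ b p) :
    px (fun r => a r + b r) p = px a p + px b p := by
  simp [px, fderiv_fun_add ha hb]

theorem py_add (ha : DifferentiableAt ℝ a p) (hb : DifferentiableAt ℝ b p) :
    py (fun r => a r + b r) p = py a p + py b p := by
  simp [py, fderiv_fun_add ha hb]

theorem px_sub (ha : DifferentiableAt ℝ a p) (hb : DifferentiableAt ℝ b p) :
    px (fun r => a r - b r) p = px a p - px b p := by
  simp [px, fderiv_fun_sub ha hb]

theorem py_sub (ha : DifferentiableAt ℝ a p) (hb : DifferentiableAt ℝ b p) :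
    py (fun r => a r - b r) p = py a p - py b p := by
  simp [py, fderiv_fun_sub ha hb]

theorem px_neg : px (fun r => -a r) p = -px a p := by
  simp [px, fderiv_fun_neg]

theorem py_neg : py (fun r => -a r) p = -py a p := by
  simp [py, fderiv_fun_neg]

theorem px_mul (ha : DifferentiableAt ℝ a p) (hb : DifferentiableAt ℝ b p) :
    px (fun r => a r * b r) p = px a p * b p + a p * px b p := by
  simp only [px, fderiv_fun_mul ha hb, add_apply, smul_apply, smul_eq_mul]
  ring

theorem py_mul (ha : DifferentiableAt ℝ a p) (hb : DifferentiableAt ℝ b p) :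
    py (fun r => a r * b r) p = py a p * b p + a p * py b p := by
  simp only [py, fderiv_fun_mul ha hb, add_apply, smul_apply, smul_eq_mul]
  ring

theorem px_congr (h : a =ᶠ[𝓝 p] b) : px a p = px b p := by
  rw [px, px, h.fderiv_eq]

theorem py_congr (h : a =ᶠ[𝓝 p] b) : py a p = py b p := by
  rw [py, py, h.fderiv_eq]

theorem differentiableAt_px (h : ContDiffAt ℝ 2 a p) : DifferentiableAt ℝ (px a) p :=
  ((h.fderiv_right (m := 1) le_rfl).differentiableAt one_ne_zero).clm_apply
    (differentiableAt_const _)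

theorem differentiableAt_py (h : ContDiffAt ℝ 2 a p) : DifferentiableAt ℝ (py a) p :=
  ((h.fderiv_right (m := 1) le_rfl).differentiableAt one_ne_zero).clm_apply
    (differentiableAt_const _)

theorem px_py_comm (h : ContDiffAt ℝ 2 a p) : px (py a) p = py (px a) p := by
  have hd := (h.fderiv_right (m := 1) le_rfl).differentiableAt one_ne_zero
  change fderiv ℝ (fun r => fderiv ℝ a r (0, 1)) p (1, 0)
    = fderiv ℝ (fun r => fderiv ℝ a r (1, 0)) p (0, 1)
  simp only [fderiv_clm_apply hd (differentiableAt_const _)]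
  simpa using h.isSymmSndFDerivAt (by simp) (1, 0) (0, 1)

theorem div_wronskian (ha : ContDiffAt ℝ 2 a p) (hb : ContDiffAt ℝ 2 b p) :
    px (fun r => a r * px b r - px a r * b r) p + py (fun r => a r * py b r - py a r * b r) p
      = a p * lap b p - lap a p * b p := by
  have ha₁ := ha.differentiableAt two_ne_zero
  have hb₁ := hb.differentiableAt two_ne_zero
  have hax := differentiableAt_px ha
  have hay := differentiableAt_py ha
  have hbx := differentiableAt_px hb
  have hby := differentiableAt_py hb
  rw [px_sub (ha₁.fun_mul hbx) (hax.fun_mul hb₁), py_sub (ha₁.fun_mul hby) (hay.fun_mul hb₁),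
    px_mul ha₁ hbx, px_mul hax hb₁, py_mul ha₁ hby, py_mul hay hb₁, lap, lap]
  ring

theorem div_grad_mul (ha : ContDiffAt ℝ 2 a p) (hb : ContDiffAt ℝ 2 b p) :
    px (fun r => a r * px b r + px a r * b r) p + py (fun r => a r * py b r + py a r * b r) p
      = a p * lap b p + 2 * (px a p * px b p + py a p * py b p) + lap a p * b p := by
  have ha₁ := ha.differentiableAt two_ne_zero
  have hb₁ := hb.differentiableAt two_ne_zero
  have hax := differentiableAt_px ha
  have hay := differentiableAt_py ha
  have hbx := differentiableAt_px hb
  have hby := differentiableAt_py hb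
  rw [px_add (ha₁.fun_mul hbx) (hax.fun_mul hb₁), py_add (ha₁.fun_mul hby) (hay.fun_mul hb₁),
    px_mul ha₁ hbx, px_mul hax hb₁, py_mul ha₁ hby, py_mul hay hb₁, lap, lap]
  ring

theorem curl_wronskian (ha : ContDiffAt ℝ 2 a p) (hb : ContDiffAt ℝ 2 b p) :
    py (fun r => a r * px b r - px a r * b r) p - px (fun r => a r * py b r - py a r * b r) p
      = 2 * (py a p * px b p - px a p * py b p) := by
  have ha₁ := ha.differentiableAt two_ne_zero
  have hb₁ := hb.differentiableAt two_ne_zero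
  have hax := differentiableAt_px ha
  have hay := differentiableAt_py ha
  have hbx := differentiableAt_px hb
  have hby := differentiableAt_py hb
  rw [py_sub (ha₁.fun_mul hbx) (hax.fun_mul hb₁), px_sub (ha₁.fun_mul hby) (hay.fun_mul hb₁),
    py_mul ha₁ hbx, py_mul hax hb₁, px_mul ha₁ hby, px_mul hay hb₁, px_py_comm ha, px_py_comm hb]
  ring

theorem curl_grad_mul (ha : ContDiffAt ℝ 2 a p) (hb : ContDiffAt ℝ 2 b p) :
    px (fun r => a r * py b r + py a r * b r) p - py (fun r => a r * px b r + px a r * b r) p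
      = 0 := by
  have ha₁ := ha.differentiableAt two_ne_zero
  have hb₁ := hb.differentiableAt two_ne_zero
  have hax := differentiableAt_px ha
  have hay := differentiableAt_py ha
  have hbx := differentiableAt_px hb
  have hby := differentiableAt_py hb
  rw [px_add (ha₁.fun_mul hby) (hay.fun_mul hb₁), py_add (ha₁.fun_mul hbx) (hax.fun_mul hb₁),
    px_mul ha₁ hby, px_mul hay hb₁, py_mul ha₁ hbx, py_mul hax hb₁, px_py_comm ha, px_py_comm hb]
  ring

end Calculus

/-- `∂_z̄W = (∂_z̄f / f)·W̄` at `r` for `W = u + jv`, where `∂_z̄f / f = (f_x + j f_y) / (2f)`. -/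
def MainVekuaAt (f u v : ℝ × ℝ → ℂ) (r : ℝ × ℝ) : Prop :=
  dbar (fun s => (⟨u s, v s⟩ : Bicomplex)) r =
    (⟨px f r / (2 * f r), py f r / (2 * f r)⟩ : Bicomplex) * conj ⟨u r, v r⟩

section MainVekua

variable {f u v : ℝ × ℝ → ℂ} {p : ℝ × ℝ}

theorem wronskian_eq_of_mainVekuaAt (hf : f p ≠ 0) (hW : MainVekuaAt f u v p) :
    f p * px u p - px f p * u p = f p * py v p + py f p * v p ∧
      f p * px v p + px f p * v p = -(f p * py u p - py f p * u p) := by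
  have hsc := congrArg sc hW
  have hvec := congrArg vec hW
  simp only [dbar, conj, mul_sc', mul_vec'] at hsc hvec
  field_simp at hsc hvec
  constructor
  · linear_combination hsc
  · linear_combination hvec

theorem lap_sc_of_mainVekua (hf : ContDiffAt ℝ 2 f p) (hu : ContDiffAt ℝ 2 u p)
    (hv : ContDiffAt ℝ 2 v p) (hW : ∀ᶠ r in 𝓝 p, f r ≠ 0 ∧ MainVekuaAt f u v r) :
    f p * lap u p = lap f p * u p := by
  have hE := hW.mono fun r hr => wronskian_eq_of_mainVekuaAt hr.1 hr.2
  have hx : (fun r => f r * px u r - px f r * u r) =ᶠ[𝓝 p]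
      fun r => f r * py v r + py f r * v r := hE.mono fun r hr => hr.1
  have hy : (fun r => f r * py u r - py f r * u r) =ᶠ[𝓝 p]
      fun r => -(f r * px v r + px f r * v r) := hE.mono fun r hr => by simp only [hr.2, neg_neg]
  rw [← sub_eq_zero, ← div_wronskian hf hu, px_congr hx, py_congr hy, py_neg, ← sub_eq_add_neg,
    curl_grad_mul hf hv]

theorem lap_vec_of_mainVekua (hf : ContDiffAt ℝ 2 f p) (hu : ContDiffAt ℝ 2 u p)
    (hv : ContDiffAt ℝ 2 v p) (hW : ∀ᶠ r in 𝓝 p, f r ≠ 0 ∧ MainVekuaAt f u v r) :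
    f p ^ 2 * lap v p = (2 * (px f p ^ 2 + py f p ^ 2) - f p * lap f p) * v p := by
  have hE := hW.mono fun r hr => wronskian_eq_of_mainVekuaAt hr.1 hr.2
  have hx : (fun r => f r * px v r + px f r * v r) =ᶠ[𝓝 p]
      fun r => -(f r * py u r - py f r * u r) := hE.mono fun r hr => hr.2
  have hy : (fun r => f r * py v r + py f r * v r) =ᶠ[𝓝 p]
      fun r => f r * px u r - px f r * u r := hE.mono fun r hr => hr.1.symm
  have hdiv := div_grad_mul hf hv
  rw [px_congr hx, py_congr hy, px_neg, neg_add_eq_sub, curl_wronskian hf hu] at hdiv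
  obtain ⟨hEx, hEy⟩ := hE.self_of_nhds
  linear_combination -f p * hdiv + 2 * py f p * hEx - 2 * px f p * hEy

end MainVekua

end Bicomplex

open Bicomplex in
theorem main_vekua_and_schroedinger_general (Ω : Set (ℝ × ℝ)) (hΩ : IsOpen Ω)
    (q : ℝ × ℝ → ℂ)
    (f : ℝ × ℝ → ℂ) (hf : ContDiffOn ℝ 2 f Ω) (hf0 : ∀ p ∈ Ω, f p ≠ 0)
    (hfq : ∀ p ∈ Ω, lap f p = q p * f p)
    (u v : ℝ × ℝ → ℂ) (hu : ContDiffOn ℝ 2 u Ω) (hv : ContDiffOn ℝ 2 v Ω)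
    (hW : ∀ p ∈ Ω,
      dbar (fun r => (⟨u r, v r⟩ : Bicomplex)) p =
        (⟨px f p / (2 * f p), py f p / (2 * f p)⟩ : Bicomplex) * conj ⟨u p, v p⟩) :
    ∀ p ∈ Ω,
      lap u p = q p * u p ∧
        lap v p = (2 * ((px f p) ^ 2 + (py f p) ^ 2) / (f p) ^ 2 - q p) * v p := by
  intro p hp
  have hΩp := hΩ.mem_nhds hp
  have hVekua : ∀ᶠ r in 𝓝 p, f r ≠ 0 ∧ MainVekuaAt f u v r :=
    eventually_of_mem hΩp fun r hr => ⟨hf0 r hr, hW r hr⟩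
  have hfp := hf0 p hp
  have hsc := lap_sc_of_mainVekua (hf.contDiffAt hΩp) (hu.contDiffAt hΩp) (hv.contDiffAt hΩp)
    hVekua
  have hvec := lap_vec_of_mainVekua (hf.contDiffAt hΩp) (hu.contDiffAt hΩp) (hv.contDiffAt hΩp)
    hVekua
  rw [hfq p hp] at hsc hvec
  constructor
  · exact mul_left_cancel₀ hfp (by rw [hsc]; ring)
  · field_simp
    linear_combination hvec

open Bicomplex in
/-- If `f` is a nonvanishing `C²` solution of `Δf = qf` on `Ω` and `W = u + jv` is a `C²`
solution of the main bicomplex Vekua equation `∂_z̄W = (∂_z̄f/f)·W̄`, then `Δu = qu`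
and `Δv = q₁v` with `q₁ = 2((f_x)² + (f_y)²)/f² - q`. -/
theorem main_vekua_and_schroedinger (Ω : Set (ℝ × ℝ)) (hΩ : IsOpen Ω)
    (q : ℝ × ℝ → ℂ) (hq : ContinuousOn q Ω)
    (f : ℝ × ℝ → ℂ) (hf : ContDiffOn ℝ 2 f Ω) (hf0 : ∀ p ∈ Ω, f p ≠ 0)
    (hfq : ∀ p ∈ Ω, lap f p = q p * f p)
    (u v : ℝ × ℝ → ℂ) (hu : ContDiffOn ℝ 2 u Ω) (hv : ContDiffOn ℝ 2 v Ω)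
    (hW : ∀ p ∈ Ω,
      dbar (fun r => (⟨u r, v r⟩ : Bicomplex)) p =
        (⟨px f p / (2 * f p), py f p / (2 * f p)⟩ : Bicomplex) * conj ⟨u p, v p⟩) :
    ∀ p ∈ Ω,
      lap u p = q p * u p ∧
        lap v p = (2 * ((px f p) ^ 2 + (py f p) ^ 2) / (f p) ^ 2 - q p) * v p :=
  main_vekua_and_schroedinger_general Ω hΩ q f hf hf0 hfq u v hu hv hW
end
end
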